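/- If t and r are strongly normalising terms of λCA, then α.t + β.r is strongly normalising for any nonnegative reals α, β. -/

import Mathlib

open scoped NNReal

namespace LCA

/-! ## Types of λCA -/

mutual
inductive UTy : Type
  | var : ℕ → UTy
  | arrow : UTy → Ty → UTy
  | all : UTy → UTy
inductive Ty : Type
  | u : UTy → Ty
  | add : Ty → Ty → Ty
  | zero : Ty
end

mutual
def UTy.shift (d c : ℕ) : UTy → UTy
  | .var n => .var (if n < c then n else n + d)
  | .arrow U T => .arrow (U.shift d c) (T.shift d c)
  | .all U => .all (U.shift d (c+1))
def Ty.shift (d c : ℕ) : Ty → Ty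
  | .u U => .u (U.shift d c)
  | .add T R => .add (T.shift d c) (R.shift d c)
  | .zero => .zero
end

mutual
def UTy.subst (k : ℕ) (V : UTy) : UTy → UTy
  | .var n => if n = k then V else .var (if k < n then n - 1 else n)
  | .arrow U T => .arrow (UTy.subst k V U) (Ty.subst k V T)
  | .all U => .all (UTy.subst (k+1) (V.shift 1 0) U)
termination_by t => sizeOf t
def Ty.subst (k : ℕ) (V : UTy) : Ty → Ty
  | .u U => .u (UTy.subst k V U)
  | .add T R => .add (Ty.subst k V T) (Ty.subst k V R)
  | .zero => .zero
termination_by t => sizeOf t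
end

/- Type equivalence: least congruence with `T + 0̄ ≡ T`, commutativity and
associativity of `+`. -/
mutual
inductive UEq : UTy → UTy → Prop
  | refl : ∀ U, UEq U U
  | symm : ∀ {U V}, UEq U V → UEq V U
  | trans : ∀ {U V W}, UEq U V → UEq V W → UEq U W
  | arrow : ∀ {U V T S}, UEq U V → TyEq T S → UEq (.arrow U T) (.arrow V S)
  | all : ∀ {U V}, UEq U V → UEq (.all U) (.all V)
inductive TyEq : Ty → Ty → Prop
  | refl : ∀ T, TyEq T T
  | symm : ∀ {T R}, TyEq T R → TyEq R T
  | trans : ∀ {T R S}, TyEq T R → TyEq R S → TyEq T S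
  | u : ∀ {U V}, UEq U V → TyEq (.u U) (.u V)
  | addCong : ∀ {T T' R R'}, TyEq T T' → TyEq R R' → TyEq (.add T R) (.add T' R')
  | addZero : ∀ T, TyEq (.add T .zero) T
  | comm : ∀ T R, TyEq (.add T R) (.add R T)
  | assoc : ∀ T R S, TyEq (.add T (.add R S)) (.add (.add T R) S)
end

/-- `nTy n T` is the `n`-fold sum `T + ⋯ + T`, with `nTy 0 T = 0̄`. -/
def nTy : ℕ → Ty → Ty
  | 0, _ => .zero
  | 1, T => T
  | n+2, T => .add T (nTy (n+1) T)

/-- The imprecision order `≼` on types (Table 4). -/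
inductive Pce : Ty → Ty → Prop
  | wk : ∀ {m n : ℕ} (T : Ty), m ≤ n → Pce (nTy m T) (nTy n T)
  | ofEq : ∀ {T R}, TyEq T R → Pce T R
  | trans : ∀ {T S R}, Pce T S → Pce S R → Pce T R
  | addCong : ∀ {T₁ T₂ S₁ S₂}, Pce T₁ T₂ → Pce S₁ S₂ → Pce (.add T₁ S₁) (.add T₂ S₂)
  | arrow : ∀ {U₁ U₂ : UTy} {T₁ T₂ : Ty}, Pce (.u U₂) (.u U₁) → Pce T₁ T₂ →
      Pce (.u (.arrow U₁ T₁)) (.u (.arrow U₂ T₂))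
  | all : ∀ {U V : UTy}, Pce (.u U) (.u V) → Pce (.u (.all U)) (.u (.all V))

/-! ## Terms of λCA -/

inductive Tm : Type
  | var : ℕ → Tm
  | lam : UTy → Tm → Tm
  | tlam : Tm → Tm
  | app : Tm → Tm → Tm
  | tapp : Tm → UTy → Tm
  | zero : Tm
  | smul : ℝ≥0 → Tm → Tm
  | add : Tm → Tm → Tm

/-- Basis terms: variables, abstractions and type abstractions. -/
inductive IsBasis : Tm → Prop
  | var : ∀ n, IsBasis (.var n)
  | lam : ∀ U t, IsBasis (.lam U t)
  | tlam : ∀ t, IsBasis (.tlam t)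

def Tm.shift (d : ℕ) : ℕ → Tm → Tm
  | c, .var n => .var (if n < c then n else n + d)
  | c, .lam U t => .lam U (Tm.shift d (c+1) t)
  | c, .tlam t => .tlam (Tm.shift d c t)
  | c, .app t r => .app (Tm.shift d c t) (Tm.shift d c r)
  | c, .tapp t U => .tapp (Tm.shift d c t) U
  | _, .zero => .zero
  | c, .smul a t => .smul a (Tm.shift d c t)
  | c, .add t r => .add (Tm.shift d c t) (Tm.shift d c r)

def Tm.tshift (d : ℕ) : ℕ → Tm → Tm
  | _, .var n => .var n
  | c, .lam U t => .lam (U.shift d c) (Tm.tshift d c t)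
  | c, .tlam t => .tlam (Tm.tshift d (c+1) t)
  | c, .app t r => .app (Tm.tshift d c t) (Tm.tshift d c r)
  | c, .tapp t U => .tapp (Tm.tshift d c t) (U.shift d c)
  | _, .zero => .zero
  | c, .smul a t => .smul a (Tm.tshift d c t)
  | c, .add t r => .add (Tm.tshift d c t) (Tm.tshift d c r)

/-- Capture-avoiding substitution `t[s/x]` (de Bruijn). It acts linearly on
linear combinations. -/
def Tm.subst : ℕ → Tm → Tm → Tm
  | k, s, .var n => if n = k then s else .var (if k < n then n - 1 else n)
  | k, s, .lam U t => .lam U (Tm.subst (k+1) (s.shift 1 0) t)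
  | k, s, .tlam t => .tlam (Tm.subst k (s.tshift 1 0) t)
  | k, s, .app t r => .app (Tm.subst k s t) (Tm.subst k s r)
  | k, s, .tapp t U => .tapp (Tm.subst k s t) U
  | _, _, .zero => .zero
  | k, s, .smul a t => .smul a (Tm.subst k s t)
  | k, s, .add t r => .add (Tm.subst k s t) (Tm.subst k s r)

/-- Substitution `t[U/X]` of a unit type for a type variable in a term. -/
def Tm.tsubst : ℕ → UTy → Tm → Tm
  | _, _, .var n => .var n
  | k, V, .lam U t => .lam (UTy.subst k V U) (Tm.tsubst k V t)
  | k, V, .tlam t => .tlam (Tm.tsubst (k+1) (V.shift 1 0) t)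
  | k, V, .app t r => .app (Tm.tsubst k V t) (Tm.tsubst k V r)
  | k, V, .tapp t U => .tapp (Tm.tsubst k V t) (UTy.subst k V U)
  | _, _, .zero => .zero
  | k, V, .smul a t => .smul a (Tm.tsubst k V t)
  | k, V, .add t r => .add (Tm.tsubst k V t) (Tm.tsubst k V r)

/-! ## Typing -/

abbrev Ctx := List UTy

def sumTy : List Ty → Ty
  | [] => .zero
  | [T] => T
  | T :: Ts => .add T (sumTy Ts)

/-- Typing rules of λCA (Table 3). -/
inductive HasTy : Ctx → Tm → Ty → Prop
  | var : ∀ {Γ : Ctx} {n U}, Γ[n]? = some U → HasTy Γ (.var n) (.u U)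
  | zero : ∀ {Γ}, HasTy Γ .zero .zero
  | lam : ∀ {Γ U t T}, HasTy (U :: Γ) t T → HasTy Γ (.lam U t) (.u (.arrow U T))
  | app : ∀ {Γ t r U} {β : ℕ} {Ts : List Ty},
      HasTy Γ t (sumTy (Ts.map fun Ti => .u (.arrow U Ti))) →
      HasTy Γ r (nTy β (.u U)) →
      HasTy Γ (.app t r) (sumTy (Ts.map fun Ti => nTy β Ti))
  | tlam : ∀ {Γ t U}, HasTy (Γ.map (UTy.shift 1 0)) t (.u U) →
      HasTy Γ (.tlam t) (.u (.all U))
  | tapp : ∀ {Γ t U V}, HasTy Γ t (.u (.all U)) →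
      HasTy Γ (.tapp t V) (.u (UTy.subst 0 V U))
  | addI : ∀ {Γ t r T R}, HasTy Γ t T → HasTy Γ r R → HasTy Γ (.add t r) (.add T R)
  | smulI : ∀ {Γ t T} (a : ℝ≥0), HasTy Γ t T → HasTy Γ (.smul a t) (nTy ⌊a⌋₊ T)
  | eq : ∀ {Γ t T R}, HasTy Γ t T → TyEq T R → HasTy Γ t R

/-! ## Reduction (Table 2), modulo AC of `+` -/

/-- AC-congruence on terms: commutativity and associativity of `+`. -/
inductive ACEq : Tm → Tm → Prop
  | refl : ∀ t, ACEq t t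
  | symm : ∀ {t r}, ACEq t r → ACEq r t
  | trans : ∀ {t r s}, ACEq t r → ACEq r s → ACEq t s
  | comm : ∀ t r, ACEq (.add t r) (.add r t)
  | assoc : ∀ t r s, ACEq (.add t (.add r s)) (.add (.add t r) s)
  | addCong : ∀ {t t' r r'}, ACEq t t' → ACEq r r' → ACEq (.add t r) (.add t' r')
  | smulCong : ∀ {t t'} (a : ℝ≥0), ACEq t t' → ACEq (.smul a t) (.smul a t')
  | appCong : ∀ {t t' r r'}, ACEq t t' → ACEq r r' → ACEq (.app t r) (.app t' r')
  | tappCong : ∀ {t t'} (U : UTy), ACEq t t' → ACEq (.tapp t U) (.tapp t' U)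
  | lamCong : ∀ {t t'} (U : UTy), ACEq t t' → ACEq (.lam U t) (.lam U t')
  | tlamCong : ∀ {t t'}, ACEq t t' → ACEq (.tlam t) (.tlam t')

/-- One-step rewrite rules (Table 2), with contextual congruence. -/
inductive Step : Tm → Tm → Prop
  -- Group E
  | addZero : ∀ u, Step (.add u .zero) u
  | zeroSmul : ∀ u, Step (.smul 0 u) .zero
  | oneSmul : ∀ u, Step (.smul 1 u) u
  | smulZero : ∀ a, Step (.smul a .zero) .zero
  | smulSmul : ∀ a b u, Step (.smul a (.smul b u)) (.smul (a*b) u)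
  | smulAdd : ∀ a u v, Step (.smul a (.add u v)) (.add (.smul a u) (.smul a v))
  -- Group F
  | factor : ∀ a b u, Step (.add (.smul a u) (.smul b u)) (.smul (a+b) u)
  | factorOne : ∀ a u, Step (.add (.smul a u) u) (.smul (a+1) u)
  | factorBare : ∀ u, Step (.add u u) (.smul 2 u)
  -- Group A
  | appAddL : ∀ u v w, Step (.app (.add u v) w) (.add (.app u w) (.app v w))
  | appAddR : ∀ u v w, Step (.app w (.add u v)) (.add (.app w u) (.app w v))
  | appSmulL : ∀ a u v, Step (.app (.smul a u) v) (.smul a (.app u v))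
  | appSmulR : ∀ a u v, Step (.app v (.smul a u)) (.smul a (.app v u))
  | appZeroL : ∀ u, Step (.app .zero u) .zero
  | appZeroR : ∀ u, Step (.app u .zero) .zero
  -- β-reduction
  | beta : ∀ U t b, IsBasis b → Step (.app (.lam U t) b) (Tm.subst 0 b t)
  | tbeta : ∀ t U, Step (.tapp (.tlam t) U) (Tm.tsubst 0 U t)
  -- contextual congruence
  | addL : ∀ {t t'} (r), Step t t' → Step (.add t r) (.add t' r)
  | smulC : ∀ {t t'} (a : ℝ≥0), Step t t' → Step (.smul a t) (.smul a t')
  | appL : ∀ {t t'} (r), Step t t' → Step (.app t r) (.app t' r)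
  | appR : ∀ {r r'} (t), Step r r' → Step (.app t r) (.app t r')
  | tappC : ∀ {t t'} (U), Step t t' → Step (.tapp t U) (.tapp t' U)
  | lamC : ∀ {t t'} (U), Step t t' → Step (.lam U t) (.lam U t')
  | tlamC : ∀ {t t'}, Step t t' → Step (.tlam t) (.tlam t')

/-- One-step reduction, modulo AC of `+`. -/
def Red (t s : Tm) : Prop := ∃ t' s', ACEq t t' ∧ Step t' s' ∧ ACEq s' s

def RedStar : Tm → Tm → Prop := Relation.ReflTransGen Red

/-- Strong normalisation: no infinite reduction sequence starts from `t`. -/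
def SN (t : Tm) : Prop := Acc (fun a b => Red b a) t

/-! ## Values, neutral terms, reducibility candidates -/

def Tm.ClosedAt : ℕ → Tm → Prop
  | k, .var n => n < k
  | k, .lam _ t => Tm.ClosedAt (k+1) t
  | k, .tlam t => Tm.ClosedAt k t
  | k, .app t r => Tm.ClosedAt k t ∧ Tm.ClosedAt k r
  | k, .tapp t _ => Tm.ClosedAt k t
  | _, .zero => True
  | k, .smul _ t => Tm.ClosedAt k t
  | k, .add t r => Tm.ClosedAt k t ∧ Tm.ClosedAt k r

def Tm.Closed (t : Tm) : Prop := Tm.ClosedAt 0 t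

/-- The value grammar `v ::= λx:U.t | ΛX.t | v + v | α.v`. -/
inductive ValShape : Tm → Prop
  | lam : ∀ U t, ValShape (.lam U t)
  | tlam : ∀ t, ValShape (.tlam t)
  | add : ∀ {v w}, ValShape v → ValShape w → ValShape (.add v w)
  | smul : ∀ (a : ℝ≥0) {v}, ValShape v → ValShape (.smul a v)

def IsValue (t : Tm) : Prop := t.Closed ∧ ValShape t

/-- Neutral terms: closed terms that are not values. -/
def Neutral (t : Tm) : Prop := t.Closed ∧ ¬ ValShape t

/-- Strongly normalising closed terms. -/
def SN0 : Set Tm := {t | t.Closed ∧ SN t}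

/-- Reducibility candidates. -/
structure IsCand (A : Set Tm) : Prop where
  cr1 : A ⊆ SN0
  cr2 : ∀ ⦃t⦄, t ∈ A → ∀ ⦃t'⦄, RedStar t t' → t' ∈ A
  cr3 : ∀ ⦃t⦄, Neutral t → (∀ t', Red t t' → t' ∈ A) → t ∈ A

/-- Closure of `∅` under (CR3). -/
inductive EmptyClP : Tm → Prop
  | neu : ∀ {t}, Neutral t → (∀ t', Red t t' → EmptyClP t') → EmptyClP t

def EmptyCl : Set Tm := {t | EmptyClP t}

/-- `A ⊕ B`: closure of `{α.t + β.r | t ∈ A, r ∈ B}` under (CR2) and (CR3). -/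
inductive OplusClP (A B : Set Tm) : Tm → Prop
  | base : ∀ (a b : ℝ≥0) {t r}, t ∈ A → r ∈ B → OplusClP A B (.add (.smul a t) (.smul b r))
  | red : ∀ {t t'}, OplusClP A B t → RedStar t t' → OplusClP A B t'
  | neu : ∀ {t}, Neutral t → (∀ t', Red t t' → OplusClP A B t') → OplusClP A B t

def OplusCl (A B : Set Tm) : Set Tm := {t | OplusClP A B t}

/-- `A → B`: closure under (CR3) of `{t | ∀ basis b ∈ A, t b ∈ B}`. -/
inductive ArrowClP (A B : Set Tm) : Tm → Prop
  | base : ∀ {t}, (∀ b, IsBasis b → b ∈ A → Tm.app t b ∈ B) → ArrowClP A B t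
  | neu : ∀ {t}, Neutral t → (∀ t', Red t t' → ArrowClP A B t') → ArrowClP A B t

def ArrowCl (A B : Set Tm) : Set Tm := {t | ArrowClP A B t}

/-- `Λ A = {t | ∀ V, t@V ∈ A}`. -/
def LamSet (A : Set Tm) : Set Tm := {t | ∀ V : UTy, Tm.tapp t V ∈ A}

def extRho (S : Set Tm) (ρ : ℕ → Set Tm) : ℕ → Set Tm
  | 0 => S
  | n+1 => ρ n

/- The reducibility model `⟦·⟧_ρ`. -/
mutual
def interpU (ρ : ℕ → Set Tm) : UTy → Set Tm
  | .var n => ρ n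
  | .arrow U T => ArrowCl (interpU ρ U) (interpT ρ T)
  | .all U => ⋂ S ∈ {S : Set Tm | IsCand S}, LamSet (interpU (extRho S ρ) U)
termination_by t => sizeOf t
def interpT (ρ : ℕ → Set Tm) : Ty → Set Tm
  | .u U => interpU ρ U
  | .add T R => OplusCl (interpT ρ T) (interpT ρ R)
  | .zero => EmptyCl
termination_by t => sizeOf t
end

/-! ## Parallel substitutions (for the adequacy statement) -/

def liftTySub (δ : ℕ → UTy) : ℕ → UTy
  | 0 => .var 0
  | n+1 => (δ n).shift 1 0

mutual
def UTy.substPar (δ : ℕ → UTy) : UTy → UTy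
  | .var n => δ n
  | .arrow U T => .arrow (U.substPar δ) (T.substPar δ)
  | .all U => .all (U.substPar (liftTySub δ))
termination_by t => sizeOf t
def Ty.substPar (δ : ℕ → UTy) : Ty → Ty
  | .u U => .u (U.substPar δ)
  | .add T R => .add (T.substPar δ) (R.substPar δ)
  | .zero => .zero
termination_by t => sizeOf t
end

def Tm.tsubstPar (δ : ℕ → UTy) : Tm → Tm
  | .var n => .var n
  | .lam U t => .lam (U.substPar δ) (Tm.tsubstPar δ t)
  | .tlam t => .tlam (Tm.tsubstPar (liftTySub δ) t)
  | .app t r => .app (Tm.tsubstPar δ t) (Tm.tsubstPar δ r)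
  | .tapp t U => .tapp (Tm.tsubstPar δ t) (U.substPar δ)
  | .zero => .zero
  | .smul a t => .smul a (Tm.tsubstPar δ t)
  | .add t r => .add (Tm.tsubstPar δ t) (Tm.tsubstPar δ r)

def liftTmSub (σ : ℕ → Tm) : ℕ → Tm
  | 0 => .var 0
  | n+1 => (σ n).shift 1 0

def Tm.substPar (σ : ℕ → Tm) : Tm → Tm
  | .var n => σ n
  | .lam U t => .lam U (Tm.substPar (liftTmSub σ) t)
  | .tlam t => .tlam (Tm.substPar (fun n => (σ n).tshift 1 0) t)
  | .app t r => .app (Tm.substPar σ t) (Tm.substPar σ r)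
  | .tapp t U => .tapp (Tm.substPar σ t) U
  | .zero => .zero
  | .smul a t => .smul a (Tm.substPar σ t)
  | .add t r => .add (Tm.substPar σ t) (Tm.substPar σ r)

/-! ## The Additive calculus -/

inductive ATm : Type
  | var : ℕ → ATm
  | lam : UTy → ATm → ATm
  | tlam : ATm → ATm
  | app : ATm → ATm → ATm
  | tapp : ATm → UTy → ATm
  | zero : ATm
  | add : ATm → ATm → ATm

/-- `nA n t` is the `n`-fold sum `t + ⋯ + t`, with `nA 0 t = 0`. -/
def nA : ℕ → ATm → ATm
  | 0, _ => .zero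
  | 1, t => t
  | n+2, t => .add t (nA (n+1) t)

/-- The relation `⊑` on Additive terms. -/
inductive ASub : ATm → ATm → Prop
  | sum : ∀ {m n : ℕ} (t : ATm), m ≤ n → ASub (nA m t) (nA n t)
  | lam : ∀ {t t'} (U : UTy), ASub t t' → ASub (.lam U t) (.lam U t')
  | tlam : ∀ {t t'}, ASub t t' → ASub (.tlam t) (.tlam t')
  | tapp : ∀ {t t'} (U : UTy), ASub t t' → ASub (.tapp t U) (.tapp t' U)
  | app : ∀ {t t' r r'}, ASub t t' → ASub r r' → ASub (.app t r) (.app t' r')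
  | add : ∀ {t t' r r'}, ASub t t' → ASub r r' → ASub (.add t r) (.add t' r')
  | trans : ∀ {t r s}, ASub t r → ASub r s → ASub t s

/-- Typing rules of the Additive calculus: those of λCA without `sI`. -/
inductive AHasTy : Ctx → ATm → Ty → Prop
  | var : ∀ {Γ : Ctx} {n U}, Γ[n]? = some U → AHasTy Γ (.var n) (.u U)
  | zero : ∀ {Γ}, AHasTy Γ .zero .zero
  | lam : ∀ {Γ U t T}, AHasTy (U :: Γ) t T → AHasTy Γ (.lam U t) (.u (.arrow U T))
  | app : ∀ {Γ t r U} {β : ℕ} {Ts : List Ty},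
      AHasTy Γ t (sumTy (Ts.map fun Ti => .u (.arrow U Ti))) →
      AHasTy Γ r (nTy β (.u U)) →
      AHasTy Γ (.app t r) (sumTy (Ts.map fun Ti => nTy β Ti))
  | tlam : ∀ {Γ t U}, AHasTy (Γ.map (UTy.shift 1 0)) t (.u U) →
      AHasTy Γ (.tlam t) (.u (.all U))
  | tapp : ∀ {Γ t U V}, AHasTy Γ t (.u (.all U)) →
      AHasTy Γ (.tapp t V) (.u (UTy.subst 0 V U))
  | addI : ∀ {Γ t r T R}, AHasTy Γ t T → AHasTy Γ r R → AHasTy Γ (.add t r) (.add T R)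
  | eq : ∀ {Γ t T R}, AHasTy Γ t T → TyEq T R → AHasTy Γ t R

/-- The abstraction function `σ : λCA → Additive`. -/
noncomputable def absTm : Tm → ATm
  | .var n => .var n
  | .lam U t => .lam U (absTm t)
  | .tlam t => .tlam (absTm t)
  | .app t r => .app (absTm t) (absTm r)
  | .tapp t U => .tapp (absTm t) U
  | .zero => .zero
  | .smul a t => nA ⌊a⌋₊ (absTm t)
  | .add t r => .add (absTm t) (absTm r)

end LCA

/-! ## System F with pairs -/

namespace Fp

inductive FTm : Type
  | var : ℕ → FTm
  | lam : FTm → FTm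
  | app : FTm → FTm → FTm
  | star : FTm
  | pair : FTm → FTm → FTm
  | p1 : FTm → FTm
  | p2 : FTm → FTm

/-- The relation `⊑_F` on terms of System F with pairs. -/
inductive FSub : FTm → FTm → Prop
  | star : ∀ t, FSub .star t
  | refl : ∀ t, FSub t t
  | dup : ∀ t, FSub t (.pair t t)
  | pair : ∀ {t t' r r'}, FSub t t' → FSub r r' → FSub (.pair t r) (.pair t' r')
  | app : ∀ {t t' r r'}, FSub t t' → FSub r r' → FSub (.app t r) (.app t' r')
  | lam : ∀ {t t'}, FSub t t' → FSub (.lam t) (.lam t')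
  | p1 : ∀ {t t'}, FSub t t' → FSub (.p1 t) (.p1 t')
  | p2 : ∀ {t t'}, FSub t t' → FSub (.p2 t) (.p2 t')
  | trans : ∀ {t r s}, FSub t r → FSub r s → FSub t s

end Fp

/-!
A term is an algebraic combination, through `+`, `α.` and `0`, of leaves (variables, abstractions,
applications), and it is strongly normalising as soon as all its leaves are. Order terms
lexicographically by the multiset of the reduction ranks of their leaves (Dershowitz–Manna order)
and then by a polynomial size. A step inside a leaf, in particular a group A or β-step at the leaf,
replaces the leaf by a term all of whose leaves have smaller rank, since they are leaves of a
reduct of a strongly normalising term. The rules of groups E and F never create leaves and strictly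
decrease the size.
-/

namespace Multiset

theorem IsDershowitzMannaLT.add_right {α : Type*} [Preorder α]
    {M N : Multiset α} (h : M.IsDershowitzMannaLT N) (P : Multiset α) :
    (M + P).IsDershowitzMannaLT (N + P) := by
  obtain ⟨X, Y, Z, hZ, rfl, rfl, hYZ⟩ := h
  exact ⟨X + P, Y, Z, hZ, add_right_comm X Y P, add_right_comm X Z P, hYZ⟩

theorem isDershowitzMannaLT_of_lt {α : Type*} [Preorder α]
    {M N : Multiset α} (h : M < N) : M.IsDershowitzMannaLT N := by
  obtain ⟨Z, rfl⟩ := Multiset.le_iff_exists_add.1 h.le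
  refine ⟨M, 0, Z, ?_, (add_zero M).symm, rfl, by simp⟩
  rintro rfl
  exact h.ne (add_zero M).symm

end Multiset

namespace LCA

theorem red_of_step {t s : Tm} (h : Step t s) : Red t s :=
  ⟨t, s, .refl t, h, .refl s⟩

theorem red_of_aceq_of_red {t t' s : Tm} (h : ACEq t t') (hr : Red t' s) : Red t s :=
  let ⟨t₁, s₁, h₁, hstep, h₂⟩ := hr
  ⟨t₁, s₁, h.trans h₁, hstep, h₂⟩

theorem sn_of_aceq {t t' : Tm} (h : ACEq t t') (ht : SN t) : SN t' :=
  Acc.intro t' fun _ hs => ht.inv (red_of_aceq_of_red h hs)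

theorem red_add_left (r : Tm) {t t' : Tm} (h : Red t t') : Red (.add t r) (.add t' r) :=
  let ⟨t₁, s₁, h₁, hstep, h₂⟩ := h
  ⟨.add t₁ r, .add s₁ r, .addCong h₁ (.refl r), .addL r hstep, .addCong h₂ (.refl r)⟩

theorem red_add_right (t : Tm) {r r' : Tm} (h : Red r r') : Red (.add t r) (.add t r') :=
  let ⟨r₁, s₁, h₁, hstep, h₂⟩ := h
  ⟨.add r₁ t, .add s₁ t, (ACEq.comm t r).trans (.addCong h₁ (.refl t)), .addL t hstep,
    (ACEq.addCong h₂ (.refl t)).trans (.comm r' t)⟩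

theorem red_smul (a : ℝ≥0) {t t' : Tm} (h : Red t t') : Red (.smul a t) (.smul a t') :=
  let ⟨t₁, s₁, h₁, hstep, h₂⟩ := h
  ⟨.smul a t₁, .smul a s₁, .smulCong a h₁, .smulC a hstep, .smulCong a h₂⟩

theorem sn_of_sn_map {g : Tm → Tm} (hg : ∀ x y, Red x y → Red (g x) (g y)) {t : Tm}
    (h : SN (g t)) : SN t := by
  suffices ∀ u, SN u → ∀ t, g t = u → SN t from this _ h t rfl
  intro u hu
  induction hu with
  | intro u _ ih => rintro t rfl; exact Acc.intro t fun s hs => ih (g s) (hg t s hs) s rfl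

def SNRed (s t : Tm) : Prop := SN t ∧ Red t s

theorem acc_snRed (t : Tm) : Acc SNRed t := by
  by_cases ht : SN t
  · induction ht with
    | intro t _ ih => exact Acc.intro t fun s hs => ih s hs.2
  · exact Acc.intro t fun _ hs => absurd hs.1 ht

/-- The height of the reduction tree of `t` (junk value `0` when `t` is not strongly
normalising). -/
noncomputable def rank (t : Tm) : Ordinal := (acc_snRed t).rank

theorem rank_lt_of_red {t s : Tm} (ht : SN t) (h : Red t s) : rank s < rank t :=
  Acc.rank_lt_of_rel (acc_snRed t) ⟨ht, h⟩

theorem rank_le_of_forall_snRed {t t' : Tm} (h : ∀ s, SNRed s t → rank s < rank t') :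
    rank t ≤ rank t' := by
  rw [rank, Acc.rank_eq]
  exact Ordinal.iSup_le fun ⟨s, hs⟩ => Order.succ_le_of_lt (h s hs)

theorem rank_eq_of_aceq {t t' : Tm} (h : ACEq t t') : rank t = rank t' := by
  have key : ∀ {t t'}, ACEq t t' → rank t ≤ rank t' := fun h =>
    rank_le_of_forall_snRed fun _ ⟨hsn, hred⟩ =>
      rank_lt_of_red (sn_of_aceq h hsn) (red_of_aceq_of_red h.symm hred)
  exact (key h).antisymm (key h.symm)

theorem rank_le_rank_map {g : Tm → Tm} (hg : ∀ x y, Red x y → Red (g x) (g y)) {t : Tm}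
    (h : SN (g t)) : rank t ≤ rank (g t) := by
  suffices ∀ u, SN u → ∀ t, g t = u → rank t ≤ rank u from this _ h t rfl
  intro u hu
  induction hu with
  | intro u hu ih =>
    rintro t rfl
    exact rank_le_of_forall_snRed fun s ⟨_, hs⟩ =>
      (ih _ (hg t s hs) s rfl).trans_lt (rank_lt_of_red (Acc.intro _ hu) (hg t s hs))

def leaves : Tm → Multiset Tm
  | .add t r => leaves t + leaves r
  | .smul _ t => leaves t
  | .zero => 0
  | t => {t}

theorem exists_map_of_mem_leaves {b : Tm} :
    ∀ {q : Tm}, b ∈ leaves q → ∃ g : Tm → Tm, (∀ x y, Red x y → Red (g x) (g y)) ∧ g b = q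
  | .add t r, hb => by
    rcases Multiset.mem_add.1 hb with hb | hb
    · obtain ⟨g, hg, rfl⟩ := exists_map_of_mem_leaves hb
      exact ⟨fun x => .add (g x) r, fun x y h => red_add_left r (hg x y h), rfl⟩
    · obtain ⟨g, hg, rfl⟩ := exists_map_of_mem_leaves hb
      exact ⟨fun x => .add t (g x), fun x y h => red_add_right t (hg x y h), rfl⟩
  | .smul a t, hb => by
    obtain ⟨g, hg, rfl⟩ := exists_map_of_mem_leaves (q := t) hb
    exact ⟨fun x => .smul a (g x), fun x y h => red_smul a (hg x y h), rfl⟩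
  | .zero, hb => absurd hb (Multiset.notMem_zero b)
  | .var _, hb | .lam _ _, hb | .tlam _, hb | .app _ _, hb | .tapp _ _, hb => by
    rw [Multiset.mem_singleton.1 hb]
    exact ⟨id, fun _ _ h => h, rfl⟩

theorem sn_of_mem_leaves {b q : Tm} (hb : b ∈ leaves q) (hq : SN q) : SN b :=
  let ⟨_, hg, hgb⟩ := exists_map_of_mem_leaves hb
  sn_of_sn_map hg (hgb ▸ hq)

theorem rank_le_of_mem_leaves {b q : Tm} (hb : b ∈ leaves q) (hq : SN q) : rank b ≤ rank q := by
  obtain ⟨g, hg, rfl⟩ := exists_map_of_mem_leaves hb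
  exact rank_le_rank_map hg hq

instance : IsTrans Tm ACEq := ⟨fun _ _ _ => ACEq.trans⟩

theorem rel_leaves_of_aceq {t t' : Tm} (h : ACEq t t') :
    Multiset.Rel ACEq (leaves t) (leaves t') := by
  induction h with
  | refl t => exact Multiset.rel_refl_of_refl_on fun x _ => .refl x
  | symm _ ih => exact (Multiset.rel_flip.2 ih).mono fun _ _ _ _ h => ACEq.symm h
  | trans _ _ ih₁ ih₂ => exact ih₁.trans _ ih₂
  | comm t r =>
    rw [leaves, leaves, add_comm]
    exact Multiset.rel_refl_of_refl_on fun x _ => .refl x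
  | assoc t r s =>
    rw [leaves, leaves, leaves, leaves, add_assoc]
    exact Multiset.rel_refl_of_refl_on fun x _ => .refl x
  | addCong _ _ ih₁ ih₂ => exact ih₁.add ih₂
  | smulCong _ _ ih => exact ih
  | appCong h₁ h₂ => exact Multiset.Rel.cons (.appCong h₁ h₂) .zero
  | tappCong U h₁ => exact Multiset.Rel.cons (.tappCong U h₁) .zero
  | lamCong U h₁ => exact Multiset.Rel.cons (.lamCong U h₁) .zero
  | tlamCong h₁ => exact Multiset.Rel.cons (.tlamCong h₁) .zero

def AlgSN (t : Tm) : Prop := ∀ b ∈ leaves t, SN b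

theorem algSN_add_iff {t r : Tm} : AlgSN (.add t r) ↔ AlgSN t ∧ AlgSN r := by
  simp only [AlgSN, leaves, Multiset.mem_add, or_imp, forall_and]

theorem algSN_of_sn {t : Tm} (ht : SN t) : AlgSN t := fun _ hb => sn_of_mem_leaves hb ht

theorem algSN_of_aceq {t t' : Tm} (h : ACEq t t') (ht : AlgSN t) : AlgSN t' := fun _ hb =>
  let ⟨_, ha, hab⟩ :=
    Multiset.exists_mem_of_rel_of_mem (Multiset.rel_flip.2 (rel_leaves_of_aceq h)) hb
  sn_of_aceq hab (ht _ ha)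

theorem algSN_of_leaves_le {t t' : Tm} (h : leaves t' ≤ leaves t) (ht : AlgSN t) : AlgSN t' :=
  fun b hb => ht b (Multiset.mem_of_le h hb)

noncomputable def weight (t : Tm) : Multiset Ordinal := (leaves t).map rank

theorem weight_add (t r : Tm) : weight (.add t r) = weight t + weight r :=
  Multiset.map_add _ _ _

def algSize : Tm → ℕ
  | .add t r => algSize t + algSize r + 1
  | .smul _ t => 2 * algSize t
  | _ => 1

theorem one_le_algSize : ∀ t : Tm, 1 ≤ algSize t
  | .add t r => by have := one_le_algSize t; simp only [algSize]; omega
  | .smul _ t => by have := one_le_algSize t; simp only [algSize]; omega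
  | .zero | .var _ | .lam _ _ | .tlam _ | .app _ _ | .tapp _ _ => le_rfl

noncomputable def termMeasure (t : Tm) : Multiset Ordinal × ℕ := (weight t, algSize t)

def MeasureLT (q p : Tm) : Prop :=
  Prod.Lex Multiset.IsDershowitzMannaLT (· < ·) (termMeasure q) (termMeasure p)

theorem wellFounded_measureLT : WellFounded MeasureLT :=
  InvImage.wf termMeasure (Multiset.wellFounded_isDershowitzMannaLT.prod_lex wellFounded_lt)

theorem termMeasure_eq_of_aceq {t t' : Tm} (h : ACEq t t') : termMeasure t = termMeasure t' := by
  refine Prod.ext ?_ ?_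
  · exact Multiset.rel_eq.1 <| Multiset.rel_map.2 <|
      (rel_leaves_of_aceq h).mono fun _ _ _ _ h => rank_eq_of_aceq h
  · induction h with
    | symm _ ih => exact ih.symm
    | trans _ _ ih₁ ih₂ => exact ih₁.trans ih₂
    | comm | assoc | addCong | smulCong =>
      simp only [termMeasure, algSize] at *; omega
    | _ => rfl

theorem measureLT_iff {q p : Tm} : MeasureLT q p ↔
    (weight q).IsDershowitzMannaLT (weight p) ∨ weight q = weight p ∧ algSize q < algSize p :=
  Prod.lex_def

theorem measureLT_add_right {t t' : Tm} (h : MeasureLT t' t) (r : Tm) :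
    MeasureLT (.add t' r) (.add t r) := by
  rcases measureLT_iff.1 h with hw | ⟨hw, hs⟩
  · exact measureLT_iff.2 (.inl (weight_add t' r ▸ weight_add t r ▸ hw.add_right (weight r)))
  · refine measureLT_iff.2 (.inr ⟨by rw [weight_add, weight_add, hw], ?_⟩)
    simp only [algSize]; omega

theorem measureLT_smul {t t' : Tm} (h : MeasureLT t' t) (a : ℝ≥0) :
    MeasureLT (.smul a t') (.smul a t) := by
  rcases measureLT_iff.1 h with hw | ⟨hw, hs⟩
  · exact measureLT_iff.2 (.inl hw)
  · exact measureLT_iff.2 (.inr ⟨hw, by simp only [algSize]; omega⟩)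

theorem measureLT_of_leaves_le {q p : Tm} (hl : leaves q ≤ leaves p)
    (hs : algSize q < algSize p) : MeasureLT q p := by
  rcases (Multiset.map_le_map (f := rank) hl).lt_or_eq with hw | hw
  · exact measureLT_iff.2 (.inl (Multiset.isDershowitzMannaLT_of_lt hw))
  · exact measureLT_iff.2 (.inr ⟨hw, hs⟩)

theorem measureLT_of_red_of_leaves_eq {p q : Tm} (hp : leaves p = {p}) (hsn : SN p)
    (h : Red p q) : MeasureLT q p := by
  refine measureLT_iff.2 (.inl ⟨0, weight q, {rank p}, by simp, (zero_add _).symm, ?_, ?_⟩)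
  · rw [weight, hp, Multiset.map_singleton, zero_add]
  · intro y hy
    obtain ⟨b, hb, rfl⟩ := Multiset.mem_map.1 hy
    exact ⟨rank p, Multiset.mem_singleton_self _,
      (rank_le_of_mem_leaves hb (hsn.inv h)).trans_lt (rank_lt_of_red hsn h)⟩

theorem algSN_measureLT_of_red_of_leaves_eq {p q : Tm} (hp : leaves p = {p}) (halg : AlgSN p)
    (h : Red p q) : AlgSN q ∧ MeasureLT q p := by
  have hsn : SN p := halg p (hp ▸ Multiset.mem_singleton_self p)
  exact ⟨algSN_of_sn (hsn.inv h), measureLT_of_red_of_leaves_eq hp hsn h⟩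

theorem algSN_measureLT_of_leaves_le {p q : Tm} (hl : leaves q ≤ leaves p)
    (hs : algSize q < algSize p) (halg : AlgSN p) : AlgSN q ∧ MeasureLT q p :=
  ⟨algSN_of_leaves_le hl halg, measureLT_of_leaves_le hl hs⟩

theorem Step.algSN_measureLT {p q : Tm} (h : Step p q) (halg : AlgSN p) :
    AlgSN q ∧ MeasureLT q p := by
  -- kept through the induction because the leaf cases need the step as a reduction
  have hred := red_of_step h
  induction h with
  | addZero u | zeroSmul u | oneSmul u | smulSmul _ _ u | factor _ _ u | factorOne _ u
    | factorBare u =>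
    refine algSN_measureLT_of_leaves_le ?_ ?_ halg
    · simp [leaves]
    · have := one_le_algSize u; simp only [algSize]; omega
  | smulZero _ => exact algSN_measureLT_of_leaves_le le_rfl (by simp [algSize]) halg
  | smulAdd _ u v =>
    refine algSN_measureLT_of_leaves_le le_rfl ?_ halg
    simp only [algSize]; omega
  | addL r hst ih =>
    obtain ⟨ht, hr⟩ := algSN_add_iff.1 halg
    obtain ⟨ht', hlt⟩ := ih ht (red_of_step hst)
    exact ⟨algSN_add_iff.2 ⟨ht', hr⟩, measureLT_add_right hlt r⟩
  | smulC a hst ih =>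
    obtain ⟨ht', hlt⟩ := ih halg (red_of_step hst)
    exact ⟨ht', measureLT_smul hlt a⟩
  | _ => exact algSN_measureLT_of_red_of_leaves_eq rfl halg hred

theorem sn_of_algSN (t : Tm) (ht : AlgSN t) : SN t := by
  induction t using wellFounded_measureLT.induction with
  | _ t ih =>
    refine Acc.intro t fun s ⟨t₁, s₁, htt₁, hstep, hs₁s⟩ => sn_of_aceq hs₁s ?_
    obtain ⟨hs₁, hlt⟩ := hstep.algSN_measureLT (algSN_of_aceq htt₁ ht)
    refine ih s₁ ?_ hs₁
    rwa [MeasureLT, ← termMeasure_eq_of_aceq htt₁] at hlt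

theorem sn_add {t r : Tm} (ht : SN t) (hr : SN r) : SN (.add t r) :=
  sn_of_algSN _ (algSN_add_iff.2 ⟨algSN_of_sn ht, algSN_of_sn hr⟩)

theorem sn_smul (a : ℝ≥0) {t : Tm} (ht : SN t) : SN (.smul a t) :=
  sn_of_algSN _ fun b hb => algSN_of_sn ht b hb

end LCA

open LCA in
/-- a linear combination of strongly normalising terms is
strongly normalising. -/
theorem sn_linear_combination {t r : Tm} (ht : SN t) (hr : SN r) (a b : ℝ≥0) :
    SN (Tm.add (Tm.smul a t) (Tm.smul b r)) :=
  sn_add (sn_smul a ht) (sn_smul b hr)
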